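/- arXiv:2009.14193 — 2 statements merged into one kernel-verified Lean document; each statement's English description precedes it below -/
import Mathlib

section
/- In the RAPS setting with λ = 1 and any k_reg ≤ k*, where k* is the smallest k such that the top-k prediction sets cover at least ⌈(n+1)(1−α)⌉ of the n calibration points, the calibrated threshold satisfies τ̂ ≤ 1 + k* − k_reg, and consequently the RAPS prediction set on any new point is contained in the top-k* set: C*(X_{n+1}, U_{n+1}, τ̂) ⊆ {ŷ_(1)(X_{n+1}), ..., ŷ_(k*)(X_{n+1})}. -/
/-!
At least `⌈(n+1)(1-α)⌉` calibration points have a label of rank at most `k*`, and each of them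
scores at most `1 + (k* - k_reg)`, since the mass part `ρ + π̂·u` never exceeds `1`; so the
quantile `τ̂` is at most `1 + (k* - k_reg)` as well. Conversely a label of rank `o > k* ≥ 1` has
a strictly more likely label, so `ρ > 0`, and its penalty is `o - k_reg ≥ 1 + (k* - k_reg)`; its
score therefore exceeds `τ̂`.
-/

open MeasureTheory

/-- The `k`-th smallest element of a list of reals (`k ≥ 1`). -/
noncomputable def kthSmallest (l : List ℝ) (k : ℕ) : ℝ :=
  ((l : Multiset ℝ).sort (· ≤ ·)).getD (k - 1) 0

/-- Total estimated probability mass of labels strictly more likely than `y` at `x`. -/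
noncomputable def probMassAbove {d K : ℕ} (π : (Fin d → ℝ) → Fin K → ℝ)
    (x : Fin d → ℝ) (y : Fin K) : ℝ :=
  ∑ y' : Fin K, if π x y < π x y' then π x y' else 0

/-- The rank of label `y` at `x`: the number of labels at least as likely as `y`. -/
noncomputable def labelRank {d K : ℕ} (π : (Fin d → ℝ) → Fin K → ℝ)
    (x : Fin d → ℝ) (y : Fin K) : ℕ :=
  ({y' : Fin K | π x y ≤ π x y'} : Set (Fin K)).ncard

/-- The RAPS conformal score `s(x,u,y) = ρ_x(y) + π̂_x(y)·u + λ·(o_x(y) - k_reg)⁺`. -/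
noncomputable def rapsScore {d K : ℕ} (π : (Fin d → ℝ) → Fin K → ℝ) (lam kreg : ℝ)
    (x : Fin d → ℝ) (u : ℝ) (y : Fin K) : ℝ :=
  probMassAbove π x y + π x y * u + lam * max ((labelRank π x y : ℝ) - kreg) 0

theorem List.getD_le_of_lt_countP {s : List ℝ} (hs : s.Pairwise (· ≤ ·)) {m : ℕ} {B : ℝ}
    (hm : m < s.countP (· ≤ B)) : s.getD m 0 ≤ B := by
  induction s generalizing m with
  | nil => simp at hm
  | cons a t ih =>
    rw [List.pairwise_cons] at hs
    cases m with
    | zero =>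
      obtain ⟨b, hb, hbB⟩ := List.countP_pos_iff.mp (Nat.zero_lt_of_lt hm)
      rcases List.mem_cons.mp hb with rfl | hbt
      · simpa using hbB
      · exact (hs.1 b hbt).trans (by simpa using hbB)
    | succ k =>
      rw [List.countP_cons] at hm
      exact ih hs.2 (by split_ifs at hm <;> omega)

theorem List.countP_ofFn {α : Type*} {n : ℕ} (f : Fin n → α) (p : α → Prop) [DecidablePred p] :
    (List.ofFn f).countP (fun a => decide (p a)) = ({i | p (f i)} : Set (Fin n)).ncard := by
  rw [← Multiset.coe_countP, ← Fin.univ_val_map, Multiset.countP_map, Set.ncard_eq_toFinset_card']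
  simp [Finset.card, Finset.filter_val]

theorem kthSmallest_le_of_le_countP {l : List ℝ} {m : ℕ} {B : ℝ} (hm : 1 ≤ m)
    (hc : m ≤ l.countP (· ≤ B)) : kthSmallest l m ≤ B := by
  have hperm : ((l : Multiset ℝ).sort (· ≤ ·)).Perm l :=
    Multiset.coe_eq_coe.mp (Multiset.sort_eq _ _)
  exact List.getD_le_of_lt_countP (Multiset.pairwise_sort _ _) (by rw [hperm.countP_eq]; omega)

theorem kthSmallest_ofFn_le {n m : ℕ} {f : Fin n → ℝ} {B : ℝ} (hm : 1 ≤ m)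
    (hc : m ≤ ({i | f i ≤ B} : Set (Fin n)).ncard) : kthSmallest (List.ofFn f) m ≤ B :=
  kthSmallest_le_of_le_countP hm (by rwa [List.countP_ofFn])

section Scores

variable {d K : ℕ} {π : (Fin d → ℝ) → Fin K → ℝ} {x : Fin d → ℝ} {y : Fin K}

theorem probMassAbove_eq_sum_filter :
    probMassAbove π x y = ∑ y' with π x y < π x y', π x y' := by
  rw [probMassAbove, Finset.sum_filter]

theorem probMassAbove_add_self_le_one (h0 : ∀ y', 0 ≤ π x y') (h1 : ∑ y', π x y' = 1) :
    probMassAbove π x y + π x y ≤ 1 :=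
  calc probMassAbove π x y + π x y
      = ∑ y' ∈ insert y ({y' | π x y < π x y'} : Finset (Fin K)), π x y' := by
        rw [Finset.sum_insert (by simp), probMassAbove_eq_sum_filter, add_comm]
    _ ≤ ∑ y', π x y' :=
        Finset.sum_le_sum_of_subset_of_nonneg (Finset.subset_univ _) fun y' _ _ => h0 y'
    _ = 1 := h1

theorem one_le_labelRank : 1 ≤ labelRank π x y :=
  (Set.ncard_pos (Set.toFinite _)).mpr ⟨y, le_refl (π x y)⟩

theorem probMassAbove_pos (hpos : ∀ y', 0 < π x y') (hinj : Function.Injective (π x))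
    (hy : 2 ≤ labelRank π x y) : 0 < probMassAbove π x y := by
  obtain ⟨b, hyb, hby⟩ := Set.exists_ne_of_one_lt_ncard (s := {y' | π x y ≤ π x y'}) hy y
  have hlt : π x y < π x b := lt_of_le_of_ne hyb fun h => hby (hinj h).symm
  rw [probMassAbove_eq_sum_filter]
  exact (hpos b).trans_le <| Finset.single_le_sum (fun i _ => (hpos i).le) (by simpa using hlt)

theorem rapsScore_le_of_labelRank_le {lam kreg u : ℝ} {k : ℕ} (h0 : ∀ y', 0 ≤ π x y')
    (h1 : ∑ y', π x y' = 1) (hlam : 0 ≤ lam) (hu : u ≤ 1) (hkreg : kreg ≤ k)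
    (hy : labelRank π x y ≤ k) : rapsScore π lam kreg x u y ≤ 1 + lam * (k - kreg) := by
  have hmass : probMassAbove π x y + π x y * u ≤ 1 := by
    linarith [probMassAbove_add_self_le_one (y := y) h0 h1, mul_le_of_le_one_right (h0 y) hu]
  have hpen : max ((labelRank π x y : ℝ) - kreg) 0 ≤ k - kreg :=
    max_le (by gcongr) (sub_nonneg.mpr hkreg)
  unfold rapsScore
  linarith [mul_le_mul_of_nonneg_left hpen hlam]

theorem labelRank_le_of_rapsScore_le {lam kreg u : ℝ} {k : ℕ} (hpos : ∀ y', 0 < π x y')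
    (hinj : Function.Injective (π x)) (hlam : 1 ≤ lam) (hu : 0 ≤ u) (hk : 1 ≤ k)
    (h : rapsScore π lam kreg x u y ≤ 1 + lam * (k - kreg)) :
    labelRank π x y ≤ k := by
  by_contra! hlt
  have hmass : 0 < probMassAbove π x y := probMassAbove_pos hpos hinj (by omega)
  have hrank : (k : ℝ) + 1 ≤ labelRank π x y := by exact_mod_cast hlt
  have hpen : lam * (k - kreg + 1) ≤ lam * max ((labelRank π x y : ℝ) - kreg) 0 :=
    mul_le_mul_of_nonneg_left (le_max_of_le_left (by linarith)) (by linarith)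
  unfold rapsScore at h
  linarith [mul_nonneg (hpos y).le hu]

end Scores

theorem raps_dominates_topk_general
    (d K n : ℕ) (α : ℝ) (hα : α ∈ Set.Ioo (0 : ℝ) 1)
    (π : (Fin d → ℝ) → Fin K → ℝ)
    (hpos : ∀ x y, 0 < π x y)
    (hsum : ∀ x, ∑ y : Fin K, π x y = 1)
    (hdistinct : ∀ x, Function.Injective (π x))
    -- the calibration data
    (x : Fin n → (Fin d → ℝ)) (u : Fin n → ℝ) (y : Fin n → Fin K)
    (hu : ∀ i, u i ∈ Set.Icc (0 : ℝ) 1)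
    -- k* is the smallest k such that the top-k sets cover ⌈(n+1)(1-α)⌉ calibration points
    (kstar : ℕ)
    (hkstar_cov : (⌈((n : ℝ) + 1) * (1 - α)⌉ : ℤ).toNat ≤
      ({i : Fin n | labelRank π (x i) (y i) ≤ kstar} : Set (Fin n)).ncard)
    -- the regularization parameters: λ = 1 and 0 ≤ k_reg ≤ k*
    (kreg : ℝ) (hkreg : kreg ≤ (kstar : ℝ)) :
    kthSmallest (List.ofFn fun i : Fin n => rapsScore π 1 kreg (x i) (u i) (y i))
        (⌈(1 - α) * ((n : ℝ) + 1)⌉ : ℤ).toNat ≤ 1 + (kstar : ℝ) - kreg ∧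
    ∀ (x' : Fin d → ℝ) (u' : ℝ), u' ∈ Set.Icc (0 : ℝ) 1 → ∀ y' : Fin K,
      rapsScore π 1 kreg x' u' y' ≤
        kthSmallest (List.ofFn fun i : Fin n => rapsScore π 1 kreg (x i) (u i) (y i))
          (⌈(1 - α) * ((n : ℝ) + 1)⌉ : ℤ).toNat →
      labelRank π x' y' ≤ kstar := by
  set m := (⌈(1 - α) * ((n : ℝ) + 1)⌉ : ℤ).toNat
  have hcov : m ≤ ({i | labelRank π (x i) (y i) ≤ kstar} : Set (Fin n)).ncard := by
    rwa [mul_comm] at hkstar_cov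
  have hm : 1 ≤ m := by
    have := Int.ceil_pos.mpr (mul_pos (sub_pos.mpr hα.2) (by positivity : (0 : ℝ) < n + 1))
    omega
  have hkstar : 1 ≤ kstar := by
    obtain ⟨i, hi⟩ := Set.nonempty_of_ncard_ne_zero (Nat.one_le_iff_ne_zero.mp (hm.trans hcov))
    exact one_le_labelRank.trans hi
  have hτ : kthSmallest (List.ofFn fun i => rapsScore π 1 kreg (x i) (u i) (y i)) m
      ≤ 1 + 1 * ((kstar : ℝ) - kreg) :=
    kthSmallest_ofFn_le hm <| hcov.trans <| Set.ncard_le_ncard fun i hi =>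
      rapsScore_le_of_labelRank_le (fun _ => (hpos _ _).le) (hsum _) zero_le_one (hu i).2 hkreg hi
  refine ⟨by linarith, fun x' u' hu' y' hy' => ?_⟩
  exact labelRank_le_of_rapsScore_le (hpos x') (hdistinct x') le_rfl hu'.1 hkstar (hy'.trans hτ)

/-- **RAPS with `λ = 1` dominates the top-`k*` sets.**  If `k*` is the smallest `k` such that
the top-`k` sets cover at least `⌈(n+1)(1-α)⌉` of the `n` calibration points, `k_reg ≤ k*`,
and `τ̂` is the `⌈(1-α)(n+1)⌉`-th smallest calibration score, then `τ̂ ≤ 1 + k* - k_reg`, and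
the RAPS prediction set at any new point is contained in the top-`k*` set (i.e. every label
it contains has rank at most `k*`). -/
theorem raps_dominates_topk
    (d K n : ℕ) (α : ℝ) (hα : α ∈ Set.Ioo (0 : ℝ) 1)
    (π : (Fin d → ℝ) → Fin K → ℝ)
    (hpos : ∀ x y, 0 < π x y)
    (hsum : ∀ x, ∑ y : Fin K, π x y = 1)
    (hdistinct : ∀ x, Function.Injective (π x))
    -- the calibration data
    (x : Fin n → (Fin d → ℝ)) (u : Fin n → ℝ) (y : Fin n → Fin K)
    (hu : ∀ i, u i ∈ Set.Icc (0 : ℝ) 1)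
    -- the generalized quantile index is at most n
    (hk : (⌈(1 - α) * ((n : ℝ) + 1)⌉ : ℤ).toNat ≤ n)
    -- k* is the smallest k such that the top-k sets cover ⌈(n+1)(1-α)⌉ calibration points
    (kstar : ℕ)
    (hkstar_cov : (⌈((n : ℝ) + 1) * (1 - α)⌉ : ℤ).toNat ≤
      ({i : Fin n | labelRank π (x i) (y i) ≤ kstar} : Set (Fin n)).ncard)
    (hkstar_min : ∀ k : ℕ, k < kstar →
      ({i : Fin n | labelRank π (x i) (y i) ≤ k} : Set (Fin n)).ncard <
        (⌈((n : ℝ) + 1) * (1 - α)⌉ : ℤ).toNat)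
    -- the regularization parameters: λ = 1 and 0 ≤ k_reg ≤ k*
    (kreg : ℝ) (hkreg0 : 0 ≤ kreg) (hkreg : kreg ≤ (kstar : ℝ)) :
    kthSmallest (List.ofFn fun i : Fin n => rapsScore π 1 kreg (x i) (u i) (y i))
        (⌈(1 - α) * ((n : ℝ) + 1)⌉ : ℤ).toNat ≤ 1 + (kstar : ℝ) - kreg ∧
    ∀ (x' : Fin d → ℝ) (u' : ℝ), u' ∈ Set.Icc (0 : ℝ) 1 → ∀ y' : Fin K,
      rapsScore π 1 kreg x' u' y' ≤
        kthSmallest (List.ofFn fun i : Fin n => rapsScore π 1 kreg (x i) (u i) (y i))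
          (⌈(1 - α) * ((n : ℝ) + 1)⌉ : ℤ).toNat →
      labelRank π x' y' ≤ kstar :=
  raps_dominates_topk_general d K n α hα π hpos hsum hdistinct x u y hu kstar hkstar_cov kreg hkreg
end

section
/- Let (X, Y) be a pair where Y takes values in a finite set, let π̂_x be estimated class probabilities with distinct values for each x, let ρ_x(y) be the total mass of classes strictly more likely than y, and let U be uniform on [0,1] independent of (X,Y). If π̂_x(y) equals the true conditional probability P(Y = y | X = x) for all x, y, then the random variable V = ρ_X(Y) + π̂_X(Y)·U is uniformly distributed on [0,1] conditionally on X, and hence unconditionally. -/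
open MeasureTheory ProbabilityTheory

/-! Given `X = x`, the label `Y` has law `π x` and `U` is still uniform, so
`P(V ≤ t | X = x) = ∑ y, π x y * P(ρ_x(y) + π x y * U ≤ t)`. Given `Y = y`, `V` is uniform on
`[ρ_x(y), ρ_x(y) + π x y]`; listing the labels by decreasing `π x`, these intervals tile `[0, 1]`
end to end, so the sum is the length of `[0, t]`, namely `t`. Integrating over `X` gives the
unconditional law. -/

open Set

section MassAbove

variable {ι M G : Type*} [AddCommMonoid M] [LinearOrder M] [AddCommGroup G]

def massAbove (s : Finset ι) (p : ι → M) (y : ι) : M :=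
  ∑ y' ∈ s, if p y < p y' then p y' else 0

lemma massAbove_erase [DecidableEq ι] {s : Finset ι} {p : ι → M} {y₀ y : ι} (hy₀ : y₀ ∈ s)
    (hle : p y₀ ≤ p y) : massAbove s p y = massAbove (s.erase y₀) p y := by
  rw [massAbove, ← Finset.add_sum_erase s _ hy₀, if_neg hle.not_gt, zero_add, massAbove]

lemma massAbove_of_forall_le [DecidableEq ι] {s : Finset ι} {p : ι → M} {y₀ : ι}
    (hinj : InjOn p s) (hy₀ : y₀ ∈ s) (hmin : ∀ y ∈ s, p y₀ ≤ p y) :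
    massAbove s p y₀ = ∑ y ∈ s.erase y₀, p y := by
  rw [massAbove, ← Finset.add_sum_erase s _ hy₀, if_neg (lt_irrefl _), zero_add]
  refine Finset.sum_congr rfl fun y hy => if_pos ((hmin y (Finset.mem_of_mem_erase hy)).lt_of_ne ?_)
  exact fun h => Finset.ne_of_mem_erase hy (hinj (Finset.mem_of_mem_erase hy) hy₀ h.symm)

/-- The intervals `[massAbove s p y, massAbove s p y + p y)` tile `[0, ∑ y ∈ s, p y)`, in
decreasing order of `p y`. -/
theorem sum_sub_comp_massAbove (F : M → G) {s : Finset ι} {p : ι → M} (hinj : InjOn p s) :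
    ∑ y ∈ s, (F (massAbove s p y + p y) - F (massAbove s p y)) = F (∑ y ∈ s, p y) - F 0 := by
  classical
  induction s using Finset.strongInduction with
  | _ s ih =>
    rcases s.eq_empty_or_nonempty with rfl | hs
    · simp
    obtain ⟨y₀, hy₀, hmin⟩ := s.exists_min_image p hs
    have hlast : massAbove s p y₀ + p y₀ = ∑ y ∈ s, p y := by
      rw [massAbove_of_forall_le hinj hy₀ hmin, Finset.sum_erase_add _ _ hy₀]
    have hrest : ∑ y ∈ s.erase y₀, (F (massAbove s p y + p y) - F (massAbove s p y))
        = F (∑ y ∈ s.erase y₀, p y) - F 0 := by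
      rw [← ih _ (Finset.erase_ssubset hy₀) (hinj.mono (Finset.erase_subset _ _))]
      exact Finset.sum_congr rfl fun y hy => by
        rw [massAbove_erase hy₀ (hmin y (Finset.mem_of_mem_erase hy))]
    rw [← Finset.add_sum_erase s _ hy₀, hlast, massAbove_of_forall_le hinj hy₀ hmin, hrest]
    abel

end MassAbove

instance isProbabilityMeasure_volume_restrict_Icc_zero_one :
    IsProbabilityMeasure (volume.restrict (Icc (0 : ℝ) 1)) :=
  ⟨by simp⟩

lemma volume_restrict_Icc_zero_one_Iic (a : ℝ) :
    volume.restrict (Icc (0 : ℝ) 1) (Iic a) = ENNReal.ofReal (min a 1) := by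
  have : Iic a ∩ Icc 0 1 = Icc 0 (min a 1) := by
    ext u; simp only [mem_inter_iff, mem_Iic, mem_Icc, le_min_iff]; tauto
  rw [Measure.restrict_apply measurableSet_Iic, this, Real.volume_Icc, sub_zero]

lemma map_eq_volume_restrict_Icc_zero_one {Ω : Type*} [MeasurableSpace Ω] {μ : Measure Ω}
    [IsProbabilityMeasure μ] {V : Ω → ℝ} (hV : AEMeasurable V μ)
    (hcdf : ∀ t ∈ Icc (0 : ℝ) 1, μ {ω | V ω ≤ t} = ENNReal.ofReal t) :
    μ.map V = volume.restrict (Icc (0 : ℝ) 1) := by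
  have : IsProbabilityMeasure (μ.map V) := Measure.isProbabilityMeasure_map hV
  refine Measure.ext_of_Iic _ _ fun a => ?_
  rw [Measure.map_apply_of_aemeasurable hV measurableSet_Iic, volume_restrict_Icc_zero_one_Iic]
  change μ {ω | V ω ≤ a} = _
  rcases lt_or_ge a 0 with ha | ha
  · rw [ENNReal.ofReal_of_nonpos (min_le_of_left_le ha.le), ← nonpos_iff_eq_zero,
      ← ENNReal.ofReal_zero, ← hcdf 0 ⟨le_rfl, zero_le_one⟩]
    exact measure_mono fun ω (h : V ω ≤ a) => show V ω ≤ 0 by linarith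
  rcases le_total a 1 with ha' | ha'
  · rw [min_eq_left ha', hcdf a ⟨ha, ha'⟩]
  · rw [min_eq_right ha', ENNReal.ofReal_one]
    refine le_antisymm prob_le_one ?_
    rw [← ENNReal.ofReal_one, ← hcdf 1 ⟨zero_le_one, le_rfl⟩]
    exact measure_mono fun ω (h : V ω ≤ 1) => show V ω ≤ a by linarith

lemma mul_volume_restrict_Icc_zero_one_real_setOf_add_mul_le {a b : ℝ} (hb : 0 ≤ b) (t : ℝ) :
    b * (volume.restrict (Icc (0 : ℝ) 1)).real {u | a + b * u ≤ t} = min t (a + b) - min t a := by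
  rcases hb.eq_or_lt with rfl | hb
  · simp
  have hset : {u | a + b * u ≤ t} = Iic ((t - a) / b) := by
    ext u
    rw [mem_ofPred_eq, mem_Iic, le_div_iff₀ hb]
    constructor <;> intro h <;> linarith
  rw [hset, measureReal_def, volume_restrict_Icc_zero_one_Iic, ENNReal.toReal_ofReal',
    mul_max_of_nonneg _ _ hb.le, mul_min_of_nonneg _ _ hb.le, mul_div_cancel₀ _ hb.ne', mul_zero,
    mul_one]
  simp only [min_def, max_def]
  split_ifs <;> linarith

theorem sum_mul_volume_restrict_Icc_zero_one_real_setOf_massAbove_le {ι : Type*} [Fintype ι]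
    {p : ι → ℝ} (hp : ∀ y, 0 ≤ p y) (hsum : ∑ y, p y = 1) (hinj : Function.Injective p)
    {t : ℝ} (ht : t ∈ Icc (0 : ℝ) 1) :
    ∑ y, p y * (volume.restrict (Icc (0 : ℝ) 1)).real {u | massAbove Finset.univ p y + p y * u ≤ t}
      = t := by
  simp_rw [mul_volume_restrict_Icc_zero_one_real_setOf_add_mul_le (hp _)]
  rw [sum_sub_comp_massAbove (min t) hinj.injOn, hsum, min_eq_left ht.2, min_eq_right ht.1,
    sub_zero]

lemma ProbabilityTheory.IndepFun.measureReal_prodMk_preimage {Ω α β : Type*}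
    [MeasurableSpace Ω] [MeasurableSpace α] [MeasurableSpace β] {μ : Measure Ω} [IsFiniteMeasure μ] {W : Ω → α} {U : Ω → β}
    (hind : IndepFun W U μ) (hW : Measurable W) (hU : Measurable U) {S : Set (α × β)}
    (hS : MeasurableSet S) :
    μ.real ((fun ω => (W ω, U ω)) ⁻¹' S) = ∫ ω, (μ.map U).real (Prod.mk (W ω) ⁻¹' S) ∂μ := by
  have hmap := (indepFun_iff_map_prod_eq_prod_map_map hW.aemeasurable hU.aemeasurable).mp hind
  simp only [measureReal_def]
  rw [← Measure.map_apply (hW.prodMk hU) hS, hmap, Measure.prod_apply hS,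
    lintegral_map (measurable_measure_prodMk_left hS) hW]
  exact (integral_toReal ((measurable_measure_prodMk_left hS).comp hW).aemeasurable
    (ae_of_all _ fun _ => measure_lt_top _ _)).symm

lemma integral_comp_eq_integral_sum_mul_of_condExp_indicator {Ω E ι : Type*}
    [MeasurableSpace Ω] [MeasurableSpace E] [Fintype ι] [MeasurableSpace ι]
    [MeasurableSingletonClass ι] {μ : Measure Ω} [IsFiniteMeasure μ] {X : Ω → E} {Y : Ω → ι}
    (hX : Measurable X) (hY : Measurable Y) {π : E → ι → ℝ}
    (hπ : ∀ y, μ[{ω | Y ω = y}.indicator (fun _ => (1 : ℝ)) | MeasurableSpace.comap X inferInstance]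
      =ᵐ[μ] fun ω => π (X ω) y)
    {h : E → ι → ℝ} (hh : ∀ y, Measurable fun x => h x y) {C : ℝ} (hC : ∀ x y, ‖h x y‖ ≤ C) :
    ∫ ω, h (X ω) (Y ω) ∂μ = ∫ ω, ∑ y, π (X ω) y * h (X ω) y ∂μ := by
  set m := MeasurableSpace.comap X inferInstance
  set ind : ι → Ω → ℝ := fun y => {ω | Y ω = y}.indicator fun _ => 1
  have hind : ∀ y, Integrable (ind y) μ := fun y =>
    (integrable_const 1).indicator (hY (measurableSet_singleton y))
  have hhX : ∀ y, StronglyMeasurable[m] fun ω => h (X ω) y := fun y =>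
    ((hh y).comp (comap_measurable X)).stronglyMeasurable
  have hbdd : ∀ y, ∀ᵐ ω ∂μ, ‖h (X ω) y‖ ≤ C := fun y => ae_of_all _ fun ω => hC _ _
  have hmul : ∀ y, Integrable (fun ω => h (X ω) y * ind y ω) μ := fun y =>
    (hind y).bdd_mul ((hhX y).mono hX.comap_le).aestronglyMeasurable (hbdd y)
  have hπint : ∀ y, Integrable (fun ω => π (X ω) y * h (X ω) y) μ := fun y => by
    simp_rw [mul_comm (π _ y)]
    exact (integrable_condExp.congr (hπ y)).bdd_mul
      ((hhX y).mono hX.comap_le).aestronglyMeasurable (hbdd y)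
  have hslice : ∀ y, ∫ ω, h (X ω) y * ind y ω ∂μ = ∫ ω, π (X ω) y * h (X ω) y ∂μ := fun y => by
    rw [← integral_condExp hX.comap_le]
    refine integral_congr_ae ?_
    have hπy : μ[ind y | m] =ᵐ[μ] fun ω => π (X ω) y := hπ y
    filter_upwards [condExp_mul_of_stronglyMeasurable_left (hhX y) (hmul y) (hind y), hπy]
      with ω h₁ h₂
    refine h₁.trans ?_
    simp only [Pi.mul_apply]
    rw [h₂, mul_comm]
  have hsplit : ∀ ω, h (X ω) (Y ω) = ∑ y, h (X ω) y * ind y ω := fun ω => by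
    rw [Finset.sum_eq_single_of_mem (Y ω) (Finset.mem_univ _) fun y _ hy => ?_]
    · simp [ind]
    · simp [ind, Ne.symm hy]
  simp_rw [hsplit]
  rw [integral_finsetSum _ fun y _ => hmul y, integral_finsetSum _ fun y _ => hπint y]
  exact Finset.sum_congr rfl fun y _ => hslice y

lemma condExp_ae_eq_const_of_forall_setIntegral_eq {Ω : Type*} {m m₀ : MeasurableSpace Ω}
    {μ : Measure Ω} [IsFiniteMeasure μ] (hm : m ≤ m₀) {f : Ω → ℝ} (hf : Integrable f μ) (c : ℝ)
    (h : ∀ s, MeasurableSet[m] s → ∫ ω in s, f ω ∂μ = c * μ.real s) :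
    μ[f | m] =ᵐ[μ] fun _ => c :=
  (ae_eq_condExp_of_forall_setIntegral_eq hm hf (fun _ _ _ => integrableOn_const)
    (fun s hs _ => by rw [setIntegral_const, h s hs, smul_eq_mul, mul_comm])
    aestronglyMeasurable_const).symm

section APS

variable {d K : ℕ} {π : (Fin d → ℝ) → Fin K → ℝ}

lemma measurable_probMassAbove (hπmeas : ∀ y, Measurable fun x => π x y) (y : Fin K) :
    Measurable fun x => probMassAbove π x y :=
  Finset.measurable_sum _ fun y' _ =>
    Measurable.ite (measurableSet_lt (hπmeas y) (hπmeas y')) (hπmeas y') measurable_const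

lemma measurable_probMassAbove_add_mul (hπmeas : ∀ y, Measurable fun x => π x y) :
    Measurable fun q : ((Fin d → ℝ) × Fin K) × ℝ =>
      probMassAbove π q.1.1 q.1.2 + π q.1.1 q.1.2 * q.2 := by
  have hρ : Measurable fun q : (Fin d → ℝ) × Fin K => probMassAbove π q.1 q.2 :=
    measurable_from_prod_countable_left (measurable_probMassAbove hπmeas)
  have hπ : Measurable fun q : (Fin d → ℝ) × Fin K => π q.1 q.2 :=
    measurable_from_prod_countable_left hπmeas
  exact (hρ.comp measurable_fst).add ((hπ.comp measurable_fst).mul measurable_snd)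

lemma measureReal_preimage_inter_setOf_probMassAbove_add_mul_le {Ω : Type*} [MeasurableSpace Ω]
    {μ : Measure Ω} [IsProbabilityMeasure μ]
    (hnonneg : ∀ x y, 0 ≤ π x y) (hsum : ∀ x, ∑ y : Fin K, π x y = 1)
    (hdistinct : ∀ x, Function.Injective (π x))
    {X : Ω → (Fin d → ℝ)} {Y : Ω → Fin K} {U : Ω → ℝ}
    (hX : Measurable X) (hY : Measurable Y) (hU : Measurable U)
    (hπmeas : ∀ y : Fin K, Measurable fun x => π x y)
    (htrue : ∀ y : Fin K,
      μ[(Set.indicator {ω | Y ω = y} fun _ => (1 : ℝ)) |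
        MeasurableSpace.comap X inferInstance] =ᵐ[μ] fun ω => π (X ω) y)
    (hunif : μ.map U = volume.restrict (Set.Icc (0 : ℝ) 1))
    (hUindep : IndepFun (fun ω => (X ω, Y ω)) U μ)
    {t : ℝ} (ht : t ∈ Icc (0 : ℝ) 1) {A : Set (Fin d → ℝ)} (hA : MeasurableSet A) :
    μ.real (X ⁻¹' A ∩ {ω | probMassAbove π (X ω) (Y ω) + π (X ω) (Y ω) * U ω ≤ t})
      = t * μ.real (X ⁻¹' A) := by
  set unif := volume.restrict (Icc (0 : ℝ) 1)
  have hscore : MeasurableSet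
      {q : ((Fin d → ℝ) × Fin K) × ℝ | probMassAbove π q.1.1 q.1.2 + π q.1.1 q.1.2 * q.2 ≤ t} :=
    measurableSet_le (measurable_probMassAbove_add_mul hπmeas) measurable_const
  set S := {q : ((Fin d → ℝ) × Fin K) × ℝ |
    q.1.1 ∈ A ∧ probMassAbove π q.1.1 q.1.2 + π q.1.1 q.1.2 * q.2 ≤ t}
  have hS : MeasurableSet S := (measurable_fst.fst hA).inter hscore
  set h : (Fin d → ℝ) → Fin K → ℝ := fun x y =>
    A.indicator 1 x * unif.real {u | probMassAbove π x y + π x y * u ≤ t}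
  have hh : ∀ y, Measurable fun x => h x y := fun y => by
    have := (measurable_measure_prodMk_left (ν := unif) hscore).ennreal_toReal.comp
      (measurable_prodMk_right (y := y) (α := Fin d → ℝ))
    exact (measurable_const.indicator hA).mul this
  have hbdd : ∀ x y, ‖h x y‖ ≤ 1 := fun x y => by
    rw [norm_mul, Real.norm_of_nonneg measureReal_nonneg]
    exact mul_le_one₀ (norm_indicator_le_norm_self _ _ |>.trans_eq norm_one) measureReal_nonneg
      measureReal_le_one
  have hcdf : ∀ x, ∑ y, π x y * unif.real {u | probMassAbove π x y + π x y * u ≤ t} = t :=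
    fun x => sum_mul_volume_restrict_Icc_zero_one_real_setOf_massAbove_le (hnonneg x) (hsum x)
      (hdistinct x) ht
  calc μ.real (X ⁻¹' A ∩ {ω | probMassAbove π (X ω) (Y ω) + π (X ω) (Y ω) * U ω ≤ t})
      = μ.real ((fun ω => ((X ω, Y ω), U ω)) ⁻¹' S) := rfl
    _ = ∫ ω, unif.real (Prod.mk (X ω, Y ω) ⁻¹' S) ∂μ := by
      rw [hUindep.measureReal_prodMk_preimage (hX.prodMk hY) hU hS, hunif]
    _ = ∫ ω, h (X ω) (Y ω) ∂μ := integral_congr_ae <| ae_of_all _ fun ω => by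
      by_cases hx : X ω ∈ A <;> simp [h, S, hx]
    _ = ∫ ω, ∑ y, π (X ω) y * h (X ω) y ∂μ :=
      integral_comp_eq_integral_sum_mul_of_condExp_indicator hX hY htrue hh hbdd
    _ = ∫ ω, (X ⁻¹' A).indicator 1 ω * t ∂μ := by
      congr 1 with ω
      simp only [h, mul_left_comm _ (A.indicator 1 (X ω)), ← Finset.mul_sum]
      rw [hcdf]
      rfl
    _ = t * μ.real (X ⁻¹' A) := by
      rw [integral_mul_const, integral_indicator_one (hX hA), mul_comm]

end APS

/-- **Randomized probability integral transform for the APS score.**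
If `π̂_x` gives the true conditional class probabilities `P(Y = y | X = x)` (distinct for
each `x`), and `U` is uniform on `[0,1]` independent of `(X, Y)`, then
`V = ρ_X(Y) + π̂_X(Y)·U` is uniform on `[0,1]` conditionally on `X` (its conditional CDF
given `X` is `t` for every `t ∈ [0,1]`), and hence unconditionally uniform on `[0,1]`. -/
theorem randomized_probability_integral_transform
    {Ω : Type*} [MeasurableSpace Ω] (μ : Measure Ω) [IsProbabilityMeasure μ]
    (d K : ℕ) (π : (Fin d → ℝ) → Fin K → ℝ)
    (hnonneg : ∀ x y, 0 ≤ π x y) (hsum : ∀ x, ∑ y : Fin K, π x y = 1)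
    (hdistinct : ∀ x, Function.Injective (π x))
    (X : Ω → (Fin d → ℝ)) (Y : Ω → Fin K) (U : Ω → ℝ)
    (hX : Measurable X) (hY : Measurable Y) (hU : Measurable U)
    (hπmeas : ∀ y : Fin K, Measurable fun x => π x y)
    -- π̂ is the true conditional probability: P(Y = y | X) = π̂_X(y) a.e., for every y
    (htrue : ∀ y : Fin K,
      μ[(Set.indicator {ω | Y ω = y} fun _ => (1 : ℝ)) |
        MeasurableSpace.comap X inferInstance] =ᵐ[μ] fun ω => π (X ω) y)
    -- U is uniform on [0,1] and independent of (X, Y)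
    (hunif : μ.map U = volume.restrict (Set.Icc (0 : ℝ) 1))
    (hUindep : IndepFun (fun ω => (X ω, Y ω)) U μ) :
    (∀ t : ℝ, t ∈ Set.Icc (0 : ℝ) 1 →
      μ[(Set.indicator {ω | probMassAbove π (X ω) (Y ω) + π (X ω) (Y ω) * U ω ≤ t}
          fun _ => (1 : ℝ)) |
        MeasurableSpace.comap X inferInstance] =ᵐ[μ] fun _ => t) ∧
    μ.map (fun ω => probMassAbove π (X ω) (Y ω) + π (X ω) (Y ω) * U ω) =
      volume.restrict (Set.Icc (0 : ℝ) 1) := by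
  have hV : Measurable fun ω => probMassAbove π (X ω) (Y ω) + π (X ω) (Y ω) * U ω :=
    (measurable_probMassAbove_add_mul hπmeas).comp ((hX.prodMk hY).prodMk hU)
  have hVt (t : ℝ) := measurableSet_le hV (measurable_const (a := t))
  have hmass {t : ℝ} (ht : t ∈ Icc (0 : ℝ) 1) {A : Set (Fin d → ℝ)} (hA : MeasurableSet A) :=
    measureReal_preimage_inter_setOf_probMassAbove_add_mul_le hnonneg hsum hdistinct hX hY hU
      hπmeas htrue hunif hUindep ht hA
  refine ⟨fun t ht => condExp_ae_eq_const_of_forall_setIntegral_eq hX.comap_le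
    ((integrable_const 1).indicator (hVt t)) t ?_, map_eq_volume_restrict_Icc_zero_one
      hV.aemeasurable fun t ht => ?_⟩
  · rintro _ ⟨A, hA, rfl⟩
    rw [setIntegral_indicator (hVt t), setIntegral_const, smul_eq_mul, mul_one, hmass ht hA]
  · have h := hmass ht MeasurableSet.univ
    rw [preimage_univ, univ_inter, probReal_univ, mul_one] at h
    rw [← ofReal_measureReal, h]
end
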